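/- arXiv:2112.06635 — 2 statements merged into one kernel-verified Lean document; each statement's English description precedes it below -/
import Mathlib

section
/- Let C be a nonzero submodule of (Z/p^sZ)^n of rank K. Then ⌊(d_L(C)-1)/M⌋ ≤ n - K, where M = ⌊p^s/2⌋. -/
/-!
A nonzero codeword of minimal Hamming weight `w` has Lee weight at most `w ⌊m/2⌋`, so
`⌊(d_L - 1)/⌊m/2⌋⌋ ≤ w - 1`. On the other hand, puncturing `C` at `w - 1` coordinates is
injective, since a codeword vanishing elsewhere has Hamming weight below `w`. So `C` embeds in
`(ℤ/m)^(n-w+1)`, whose submodules need at most `n - w + 1` generators: their preimages in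
`ℤ^(n-w+1)` are free of rank at most `n - w + 1`. Hence `K ≤ n - w + 1`.
-/
/-- The Lee weight of an element of `ZMod m`. -/
def leeW (m : ℕ) (a : ZMod m) : ℕ := min a.val (m - a.val)

/-- The Lee weight of a vector over `ZMod m`. -/
def leeWV (m n : ℕ) (x : Fin n → ZMod m) : ℕ := ∑ i, leeW m (x i)

/-- The minimum Lee distance of a linear code. -/
noncomputable def dLee (m n : ℕ) (C : Submodule (ZMod m) (Fin n → ZMod m)) : ℕ :=
  sInf {w | ∃ c ∈ C, c ≠ 0 ∧ leeWV m n c = w}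

/-- `C` has rank `K`: it is generated by `K` elements and by no fewer. -/
def hasRank (m n K : ℕ) (C : Submodule (ZMod m) (Fin n → ZMod m)) : Prop :=
  (∃ S : Finset (Fin n → ZMod m), S.card = K ∧ Submodule.span (ZMod m) ↑S = C) ∧
  ∀ T : Finset (Fin n → ZMod m), Submodule.span (ZMod m) ↑T = C → K ≤ T.card

open Submodule

universe u

section QuotientOfPrincipalIdealDomain

variable {R A ι : Type u} [CommRing R] [IsDomain R] [IsPrincipalIdealRing R] [Fintype ι]

theorem Submodule.spanRank_le_card_of_isPrincipalIdealRing (L : Submodule R (ι → R)) :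
    L.spanRank ≤ Fintype.card ι := by
  classical
  obtain ⟨r, b⟩ := L.basisOfPid (Pi.basisFun R ι)
  have hr : r ≤ Fintype.card ι := by
    simpa [Module.finrank_eq_card_basis b] using L.finrank_le
  have hspan : span R (Finset.univ.image b : Set L) = ⊤ := by simp [b.span_eq]
  calc L.spanRank = (span R (Finset.univ.image b : Set L)).spanRank := by rw [hspan, spanRank_top]
    _ ≤ Cardinal.mk (Finset.univ.image b : Set L) := spanRank_span_le_card _
    _ = (Finset.univ.image b).card := Cardinal.mk_coe_finset
    _ ≤ Fintype.card ι := by exact_mod_cast Finset.card_image_le.trans (by simpa using hr)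

variable [CommRing A] [Algebra R A]

theorem Submodule.spanRank_le_card_of_surjective_algebraMap
    (hA : Function.Surjective (algebraMap R A)) (N : Submodule A (ι → A)) :
    N.spanRank ≤ Fintype.card ι := by
  let φ : (ι → R) →ₗ[R] (ι → A) := (Algebra.linearMap R A).compLeft ι
  let L := (N.restrictScalars R).comap φ
  calc N.spanRank = (L.map φ).spanRank := by
        rw [map_comap_eq_of_surjective hA.comp_left, spanRank_restrictScalars_eq hA]
    _ ≤ L.spanRank := spanRank_map_le φ L
    _ ≤ Fintype.card ι := L.spanRank_le_card_of_isPrincipalIdealRing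

theorem Submodule.spanRank_le_card_sub_of_forall_supported_eq_zero
    (hA : Function.Surjective (algebraMap R A)) (C : Submodule A (ι → A))
    (S : Finset ι) (hS : ∀ c ∈ C, (∀ i ∉ S, c i = 0) → c = 0) :
    C.spanRank ≤ (Fintype.card ι - S.card : ℕ) := by
  classical
  let puncture : C →ₗ[A] ({i // i ∉ S} → A) :=
    (LinearMap.funLeft A A Subtype.val).comp C.subtype
  have hinj : Function.Injective puncture := by
    refine (injective_iff_map_eq_zero puncture).2 fun c hc => Subtype.ext ?_
    exact hS c c.2 fun i hi => congrFun hc ⟨i, hi⟩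
  calc C.spanRank = ((⊤ : Submodule A C).map puncture).spanRank := by
        rw [spanRank_map_eq_of_injective puncture hinj, spanRank_top]
    _ ≤ Fintype.card {i // i ∉ S} := spanRank_le_card_of_surjective_algebraMap hA _
    _ = (Fintype.card ι - S.card : ℕ) := by simp [Fintype.card_subtype_compl]

theorem Submodule.spanRank_le_card_sub_of_lt_hammingNorm [DecidableEq A]
    (hA : Function.Surjective (algebraMap R A)) (C : Submodule A (ι → A)) {k : ℕ}
    (hk : k ≤ Fintype.card ι) (hC : ∀ c ∈ C, c ≠ 0 → k < hammingNorm c) :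
    C.spanRank ≤ (Fintype.card ι - k : ℕ) := by
  obtain ⟨S, -, hSk⟩ := Finset.exists_subset_card_eq (s := Finset.univ) (by simpa using hk)
  rw [← hSk]
  refine C.spanRank_le_card_sub_of_forall_supported_eq_zero hA S fun c hc hcS => ?_
  by_contra hne
  have hsupp : hammingNorm c ≤ S.card :=
    Finset.card_le_card fun i hi => by_contra fun hiS => (Finset.mem_filter.1 hi).2 (hcS i hiS)
  exact absurd (hC c hc hne) (by omega)

end QuotientOfPrincipalIdealDomain

theorem hasRank.spanRank_eq {m n K : ℕ} {C : Submodule (ZMod m) (Fin n → ZMod m)}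
    (hK : hasRank m n K C) : C.spanRank = K := by
  obtain ⟨⟨S, hSK, hS⟩, hmin⟩ := hK
  have hfg : C.FG := ⟨S, hS⟩
  obtain ⟨T, hT, hTC⟩ := hfg.exists_span_finset_card_eq_spanFinrank
  have hle : C.spanFinrank ≤ K := by
    simpa [← hS, hSK] using spanFinrank_span_le_ncard_of_finite (R := ZMod m) S.finite_toSet
  rw [hfg.spanRank_eq_spanFinrank, le_antisymm hle (hT ▸ hmin T hTC)]

theorem leeW_le_half (m : ℕ) [NeZero m] (a : ZMod m) : leeW m a ≤ m / 2 := by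
  have := ZMod.val_lt a
  unfold leeW
  omega

theorem leeWV_le_mul_hammingNorm (m n : ℕ) [NeZero m] (x : Fin n → ZMod m) :
    leeWV m n x ≤ m / 2 * hammingNorm x := by
  calc leeWV m n x = ∑ i with x i ≠ 0, leeW m (x i) :=
        (Finset.sum_filter_of_ne (p := (x · ≠ 0)) fun i _ h h0 => h (by simp [h0, leeW])).symm
    _ ≤ m / 2 * hammingNorm x := by
        rw [mul_comm]
        exact Finset.sum_le_card_nsmul _ _ _ fun i _ => leeW_le_half m (x i)

theorem dLee_le_leeWV {m n : ℕ} {C : Submodule (ZMod m) (Fin n → ZMod m)} {c : Fin n → ZMod m}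
    (hc : c ∈ C) (hc0 : c ≠ 0) : dLee m n C ≤ leeWV m n c :=
  Nat.sInf_le ⟨c, hc, hc0, rfl⟩

theorem dLee_bot (m n : ℕ) : dLee m n ⊥ = 0 := by
  simp [dLee]

theorem lee_singleton_floor_bound_general (n K : ℕ) (m : ℕ)
    (C : Submodule (ZMod m) (Fin n → ZMod m)) (hK : hasRank m n K C) :
    (dLee m n C - 1) / (m / 2) ≤ n - K := by
  -- `x / 0 = 0` and `sInf ∅ = 0` make the cases `m ≤ 1` and `C = ⊥` trivial.
  rcases Nat.eq_zero_or_pos (m / 2) with hM | hM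
  · simp [hM]
  have : NeZero m := ⟨by omega⟩
  rcases eq_or_ne C ⊥ with rfl | hC
  · simp [dLee_bot]
  obtain ⟨c₀, ⟨hc₀C, hc₀⟩, hmin⟩ : ∃ c₀ ∈ {c | c ∈ C ∧ c ≠ 0},
      ∀ c ∈ {c | c ∈ C ∧ c ≠ 0}, hammingNorm c₀ ≤ hammingNorm c :=
    have hne := (Submodule.ne_bot_iff C).1 hC
    ⟨_, Function.argminOn_mem hammingNorm _ hne, fun _ hc => Function.argminOn_le hammingNorm _ hc⟩
  set w := hammingNorm c₀
  have hw : 0 < w := hammingNorm_pos_iff.2 hc₀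
  have hwn : w ≤ n := hammingNorm_le_card_fintype.trans_eq (Fintype.card_fin n)
  have hK_le : K ≤ n - (w - 1) := by
    have := C.spanRank_le_card_sub_of_lt_hammingNorm (ZMod.intCast_surjective (n := m))
      (k := w - 1) (by rw [Fintype.card_fin]; omega)
      fun c hc hc0 => Nat.sub_one_lt_of_le hw (hmin c ⟨hc, hc0⟩)
    rw [hK.spanRank_eq, Fintype.card_fin] at this
    exact_mod_cast this
  have hd : dLee m n C ≤ m / 2 * w :=
    (dLee_le_leeWV hc₀C hc₀).trans (leeWV_le_mul_hammingNorm m n c₀)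
  have : (dLee m n C - 1) / (m / 2) < w :=
    (Nat.div_lt_iff_lt_mul hM).2 (by rw [mul_comm]; have := Nat.mul_pos hM hw; omega)
  omega

/-- `⌊(d_L(C)-1)/M⌋ ≤ n - K` with `M = ⌊p^s/2⌋`. -/
theorem lee_singleton_floor_bound (p s n K : ℕ) (hp : p.Prime) (hs : 0 < s)
    (m : ℕ) (hm : m = p ^ s) [NeZero m]
    (C : Submodule (ZMod m) (Fin n → ZMod m)) (hC : C ≠ ⊥)
    (hK : hasRank m n K C) :
    (dLee m n C - 1) / (m / 2) ≤ n - K :=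
  lee_singleton_floor_bound_general n K m C hK
end

section
/- For an odd prime p, the vector x = (1, 2, ..., (p-1)/2) in F_p^{(p-1)/2} generates a Lee-equidistant code: every nonzero scalar multiple λx (λ ∈ F_p, λ ≠ 0) has Lee weight (p^2-1)/8. -/
open Finset

lemma leeW_zero (m : ℕ) : leeW m 0 = 0 := by
  simp [leeW]

lemma leeW_natCast_of_two_mul_lt {m k : ℕ} (h : 2 * k < m) : leeW m k = k := by
  rw [leeW, ZMod.val_cast_of_lt (by omega)]
  omega

lemma leeW_neg (m : ℕ) [NeZero m] (a : ZMod m) : leeW m (-a) = leeW m a := by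
  rcases eq_or_ne a 0 with rfl | h
  · simp
  · rw [leeW, leeW, ZMod.neg_val, if_neg h, Nat.sub_sub_self (ZMod.val_lt a).le, Nat.min_comm]

lemma sum_leeW_mul_of_isUnit (m : ℕ) [NeZero m] {c : ZMod m} (hc : IsUnit c) :
    ∑ a : ZMod m, leeW m (c * a) = ∑ a : ZMod m, leeW m a :=
  Equiv.sum_comp (Units.mulLeft hc.unit) (leeW m)

lemma sum_zmod_eq_sum_range {M : Type*} [AddCommMonoid M] (m : ℕ) [NeZero m] (f : ZMod m → M) :
    ∑ a : ZMod m, f a = ∑ k ∈ range m, f k := by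
  refine sum_nbij' ZMod.val (fun k => (k : ZMod m)) (fun a _ => mem_range.mpr (ZMod.val_lt a))
    (fun _ _ => mem_univ _) (fun a _ => ZMod.natCast_zmod_val a)
    (fun k hk => ZMod.val_cast_of_lt (mem_range.mp hk)) (fun a _ => ?_)
  rw [ZMod.natCast_zmod_val]

lemma sum_range_two_mul_add_one_of_symm {M : Type*} [AddCommMonoid M] (F : ℕ → M) (n : ℕ)
    (hF : ∀ k ∈ range n, F (2 * n - k) = F (k + 1)) :
    ∑ k ∈ range (2 * n + 1), F k = F 0 + 2 • ∑ k ∈ range n, F (k + 1) := by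
  have hupper : ∑ k ∈ range n, F (n + 1 + k) = ∑ k ∈ range n, F (k + 1) := by
    rw [← sum_range_reflect]
    refine sum_congr rfl fun k hk => ?_
    have hk := mem_range.mp hk
    rw [show n + 1 + (n - 1 - k) = 2 * n - k by omega, hF k (mem_range.mpr hk)]
  rw [show 2 * n + 1 = n + 1 + n by ring, sum_range_add, sum_range_succ', hupper, two_nsmul,
    add_comm _ (F 0), add_assoc]

lemma sum_leeW_mul_eq_two_mul (n : ℕ) (c : ZMod (2 * n + 1)) :
    ∑ a : ZMod (2 * n + 1), leeW (2 * n + 1) (c * a) =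
      2 * ∑ k ∈ range n, leeW (2 * n + 1) (c * (k + 1)) := by
  rw [sum_zmod_eq_sum_range, sum_range_two_mul_add_one_of_symm, Nat.cast_zero, mul_zero, leeW_zero,
    zero_add, smul_eq_mul]
  · simp only [Nat.cast_add, Nat.cast_one]
  intro k hk
  have hreflect : ((2 * n - k : ℕ) : ZMod (2 * n + 1)) = -((k + 1 : ℕ) : ZMod (2 * n + 1)) := by
    rw [eq_neg_iff_add_eq_zero, ← Nat.cast_add, show 2 * n - k + (k + 1) = 2 * n + 1 by
      have := mem_range.mp hk; omega, ZMod.natCast_self]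
  rw [hreflect, mul_neg, leeW_neg]

lemma sum_leeW_univ (n : ℕ) : ∑ a : ZMod (2 * n + 1), leeW (2 * n + 1) a = n * (n + 1) := by
  have hgauss := sum_range_id_mul_two (n + 1)
  rw [sum_range_succ', add_zero, Nat.add_sub_cancel] at hgauss
  calc ∑ a : ZMod (2 * n + 1), leeW (2 * n + 1) a
      = ∑ a : ZMod (2 * n + 1), leeW (2 * n + 1) (1 * a) := by simp only [one_mul]
    _ = 2 * ∑ k ∈ range n, leeW (2 * n + 1) (1 * (k + 1)) := sum_leeW_mul_eq_two_mul n 1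
    _ = 2 * ∑ k ∈ range n, (k + 1) := by
      congr 1
      refine sum_congr rfl fun k hk => ?_
      rw [one_mul, ← Nat.cast_succ, leeW_natCast_of_two_mul_lt (by have := mem_range.mp hk; omega)]
    _ = n * (n + 1) := by rw [mul_comm, hgauss, mul_comm]

lemma leeWV_smul_eq_sum_range (m n : ℕ) (c : ZMod m) {x : Fin n → ZMod m}
    (hx : ∀ i, x i = ((i : ℕ) + 1 : ZMod m)) :
    leeWV m n (c • x) = ∑ k ∈ range n, leeW m (c * (k + 1)) := by
  rw [leeWV, ← Fin.sum_univ_eq_sum_range (fun k => leeW m (c * (k + 1)))]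
  simp only [Pi.smul_apply, smul_eq_mul, hx]

/-- For an odd prime `p`, the vector `(1,2,…,(p-1)/2) ∈ 𝔽_p^{(p-1)/2}` generates a
Lee-equidistant code: every nonzero scalar multiple has Lee weight `(p²-1)/8`. -/
theorem equidistant_construction_Fp (p : ℕ) (hp : p.Prime) (hodd : Odd p)
    (x : Fin ((p - 1) / 2) → ZMod p) (hx : ∀ i, x i = ((i : ℕ) + 1 : ZMod p)) :
    ∀ lam : ZMod p, lam ≠ 0 →
      8 * leeWV p ((p - 1) / 2) (lam • x) = p ^ 2 - 1 := by
  intro lam hlam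
  obtain ⟨n, rfl⟩ := hodd
  have : Fact (2 * n + 1).Prime := ⟨hp⟩
  have hweight := sum_leeW_mul_eq_two_mul n lam
  rw [sum_leeW_mul_of_isUnit _ hlam.isUnit, sum_leeW_univ] at hweight
  rw [leeWV_smul_eq_sum_range _ _ _ hx, show (2 * n + 1 - 1) / 2 = n by omega]
  have hsq : (2 * n + 1) ^ 2 = 4 * (n * (n + 1)) + 1 := by ring
  omega
end
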